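/- arXiv:1907.09124 — 2 statements merged into one kernel-verified Lean document; each statement's English description precedes it below -/
import Mathlib

section
/- Every Reiter extension arises from a closed generating sequence: if Φ is a set of DAL formulas, Δ a set of normal defaults, and E is a Reiter extension of Φ under Δ, then there exists a closed generating sequence s of defaults of Δ for Φ such that E = Cn(Φ ∪ Cons_s). -/
namespace DAL

/-- Actions of DAL over a countable set of basic action symbols. -/
inductive Act : Type where
  | basic : ℕ → Act
  | join : Act → Act → Act
  | meet : Act → Act → Act
  | compl : Act → Act
  | zero : Act
  | one : Act

/-- Formulas of DAL. -/
inductive Fml : Type where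
  | neg : Fml → Fml
  | or : Fml → Fml → Fml
  | eq : Act → Act → Fml
  | perm : Act → Fml
  | forb : Act → Fml

/-- Material implication, defined from ¬ and ∨. -/
def fImp (p q : Fml) : Fml := .or (.neg p) q
/-- Conjunction, defined from ¬ and ∨. -/
def fAnd (p q : Fml) : Fml := .neg (.or (.neg p) (.neg q))
/-- Biconditional. -/
def fIff (p q : Fml) : Fml := fAnd (fImp p q) (fImp q p)
/-- Verum. -/
def fTop : Fml := .or (.eq .zero .zero) (.neg (.eq .zero .zero))
/-- Falsum. -/
def fBot : Fml := .neg fTop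

/-- `ARepl a b γ γ'` : γ' is obtained from γ by replacing some (possibly zero)
occurrences of the action `a` with the action `b`. -/
inductive ARepl (a b : Act) : Act → Act → Prop where
  | repl : ARepl a b a b
  | basic (n : ℕ) : ARepl a b (.basic n) (.basic n)
  | zero : ARepl a b .zero .zero
  | one : ARepl a b .one .one
  | join {x x' y y'} : ARepl a b x x' → ARepl a b y y' → ARepl a b (.join x y) (.join x' y')
  | meet {x x' y y'} : ARepl a b x x' → ARepl a b y y' → ARepl a b (.meet x y) (.meet x' y')
  | compl {x x'} : ARepl a b x x' → ARepl a b (.compl x) (.compl x')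

/-- `FRepl a b φ φ'` : φ' is obtained from φ by replacing some (possibly zero)
occurrences of the action `a` with the action `b`. -/
inductive FRepl (a b : Act) : Fml → Fml → Prop where
  | neg {p p'} : FRepl a b p p' → FRepl a b (.neg p) (.neg p')
  | or {p p' q q'} : FRepl a b p p' → FRepl a b q q' → FRepl a b (.or p q) (.or p' q')
  | eq {x x' y y'} : ARepl a b x x' → ARepl a b y y' → FRepl a b (.eq x y) (.eq x' y')
  | perm {x x'} : ARepl a b x x' → FRepl a b (.perm x) (.perm x')
  | forb {x x'} : ARepl a b x x' → FRepl a b (.forb x) (.forb x')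

/-- The axioms of the Hilbert system for DAL: a complete classical axiomatization of
¬, ∨; Boolean algebra axioms for actions plus ¬(0=1); equality and substitution
axioms; and the deontic axioms D1, D2, D3. -/
inductive Ax : Fml → Prop where
  -- classical axioms for ¬ and ∨ (Principia Mathematica style)
  | pl1 (p : Fml) : Ax (fImp (.or p p) p)
  | pl2 (p q : Fml) : Ax (fImp p (.or p q))
  | pl3 (p q : Fml) : Ax (fImp (.or p q) (.or q p))
  | pl4 (p q r : Fml) : Ax (fImp (fImp p q) (fImp (.or r p) (.or r q)))
  -- Boolean algebra axioms for actions
  | joinComm (x y : Act) : Ax (.eq (.join x y) (.join y x))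
  | meetComm (x y : Act) : Ax (.eq (.meet x y) (.meet y x))
  | joinAssoc (x y z : Act) : Ax (.eq (.join x (.join y z)) (.join (.join x y) z))
  | meetAssoc (x y z : Act) : Ax (.eq (.meet x (.meet y z)) (.meet (.meet x y) z))
  | joinDistrib (x y z : Act) : Ax (.eq (.join x (.meet y z)) (.meet (.join x y) (.join x z)))
  | meetDistrib (x y z : Act) : Ax (.eq (.meet x (.join y z)) (.join (.meet x y) (.meet x z)))
  | joinZero (x : Act) : Ax (.eq (.join x .zero) x)
  | meetOne (x : Act) : Ax (.eq (.meet x .one) x)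
  | joinCompl (x : Act) : Ax (.eq (.join x (.compl x)) .one)
  | meetCompl (x : Act) : Ax (.eq (.meet x (.compl x)) .zero)
  | nondeg : Ax (.neg (.eq .zero .one))
  -- equality axioms
  | eqRefl (x : Act) : Ax (.eq x x)
  | eqSymm (x y : Act) : Ax (fImp (.eq x y) (.eq y x))
  | eqTrans (x y z : Act) : Ax (fImp (.eq x y) (fImp (.eq y z) (.eq x z)))
  -- substitution axiom
  | subst {x y : Act} {p q : Fml} : FRepl x y p q → Ax (fImp (.eq x y) (fImp p q))
  -- deontic axioms
  | d1 (x y : Act) : Ax (fIff (.perm (.join x y)) (fAnd (.perm x) (.perm y)))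
  | d2 (x y : Act) : Ax (fIff (.forb (.join x y)) (fAnd (.forb x) (.forb y)))
  | d3 (x : Act) : Ax (fIff (.eq x .zero) (fAnd (.perm x) (.forb x)))

/-- `IsProof Φ s` : the finite sequence (list) `s` is a proof from `Φ`: every member
is an axiom, a member of `Φ`, or follows from two earlier members by modus ponens. -/
def IsProof (Φ : Set Fml) (s : List Fml) : Prop :=
  ∀ (k : ℕ) (hk : k < s.length),
    Ax (s[k]'hk) ∨ (s[k]'hk) ∈ Φ ∨
      ∃ (i j : ℕ) (hi : i < k) (hj : j < k),
        s[j]'(Nat.lt_trans hj hk) = fImp (s[i]'(Nat.lt_trans hi hk)) (s[k]'hk)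

/-- `Prov Φ φ` (Φ ⊢ φ) : there is a proof of φ from Φ. -/
def Prov (Φ : Set Fml) (φ : Fml) : Prop :=
  ∃ s : List Fml, IsProof Φ s ∧ s.getLast? = some φ

/-- Φ is ⊢-consistent. -/
def Consistent (Φ : Set Fml) : Prop := ¬ Prov Φ fBot

/-- Deductive closure. -/
def Cn (Ψ : Set Fml) : Set Fml := {φ | Prov Ψ φ}

end DAL

namespace DAL

/-- A default π:ρ/χ with prerequisite, justification, and consequent. -/
structure Default : Type where
  pre : Fml
  jus : Fml
  con : Fml

/-- A default is normal iff its justification equals its consequent. -/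
def Default.Normal (d : Default) : Prop := d.jus = d.con

/-- The operator Γ^Φ_Δ : `GammaSet Φ Δ Ψ` is the smallest set `X` of formulas such
that (i) Φ ⊆ X, (ii) X is deductively closed, and (iii) for each default π:ρ/χ in Δ,
if π ∈ X and ¬ρ ∉ Ψ then χ ∈ X. -/
def GammaSet (Φ : Set Fml) (Δ : Set Default) (Ψ : Set Fml) : Set Fml :=
  ⋂₀ {X | Φ ⊆ X ∧ X = Cn X ∧ ∀ d ∈ Δ, d.pre ∈ X → Fml.neg d.jus ∉ Ψ → d.con ∈ X}

/-- `E` is a Reiter extension of Φ under Δ iff it is a fixed point of Γ^Φ_Δ. -/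
def IsExtension (Φ : Set Fml) (Δ : Set Default) (E : Set Fml) : Prop :=
  E = GammaSet Φ Δ E

/-- Default consequence (Φ |≈_Δ φ): some Reiter extension E of Φ under Δ
satisfies E ⊢ φ. -/
def DCons (Φ : Set Fml) (Δ : Set Default) (φ : Fml) : Prop :=
  ∃ E, IsExtension Φ Δ E ∧ Prov E φ

/-- One step of a default proof: an axiom, a member of Φ, modus ponens from two
earlier members, or default detachment from an earlier member. -/
def DProofStep (Φ : Set Fml) (Δ : Set Default) (s : List Fml) (k : ℕ) (hk : k < s.length) : Prop :=
  Ax (s[k]'hk) ∨ (s[k]'hk) ∈ Φ ∨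
    (∃ (i j : ℕ) (hi : i < k) (hj : j < k),
      s[j]'(Nat.lt_trans hj hk) = fImp (s[i]'(Nat.lt_trans hi hk)) (s[k]'hk)) ∨
    (∃ (j : ℕ) (hj : j < k),
      (⟨s[j]'(Nat.lt_trans hj hk), s[k]'hk, s[k]'hk⟩ : Default) ∈ Δ)

/-- Default provability (Φ ⊢_Δ φ): there is a finite sequence ψ₁,…,ψₙ with ψₙ = φ,
each member an axiom, a member of Φ, obtained by modus ponens, or obtained by
default detachment, such that {ψ₁,…,ψₙ} is ⊢-consistent. -/
def DProv (Φ : Set Fml) (Δ : Set Default) (φ : Fml) : Prop :=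
  ∃ s : List Fml,
    (∀ (k : ℕ) (hk : k < s.length), DProofStep Φ Δ s k hk) ∧
    s.getLast? = some φ ∧
    Consistent {ψ | ψ ∈ s}

end DAL

namespace DAL

/-- A (potentially infinite) sequence of defaults, represented as a partial function
on ℕ whose domain is downward closed. -/
structure DSeq : Type where
  f : ℕ → Option Default
  dc : ∀ m n : ℕ, m ≤ n → f m = none → f n = none

/-- Cons_{s|_n}: the set of consequents of the first `n` defaults of `s`. -/
def consUpTo (s : DSeq) (n : ℕ) : Set Fml :=
  {χ | ∃ i < n, ∃ d : Default, s.f i = some d ∧ d.con = χ}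

/-- Cons_s: the set of consequents of all the defaults of `s`. -/
def consAll (s : DSeq) : Set Fml :=
  {χ | ∃ i : ℕ, ∃ d : Default, s.f i = some d ∧ d.con = χ}

/-- `s` is a generating sequence of defaults of Δ for Φ: every entry is a default
of Δ whose prerequisite is provable from Φ together with the consequents of the
previous entries, and Φ together with the consequents up to (and including) each
entry is ⊢-consistent. -/
def Generating (Φ : Set Fml) (Δ : Set Default) (s : DSeq) : Prop :=
  ∀ (i : ℕ) (d : Default), s.f i = some d →
    d ∈ Δ ∧ Prov (Φ ∪ consUpTo s i) d.pre ∧ Consistent (Φ ∪ consUpTo s (i + 1))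

/-- `s` is a strict initial segment of `t`. -/
def StrictInit (s t : DSeq) : Prop :=
  (∀ (n : ℕ) (d : Default), s.f n = some d → t.f n = some d) ∧
  (∃ n : ℕ, s.f n = none ∧ t.f n ≠ none)

/-- A generating sequence is closed iff it is not a strict initial segment of any
other generating sequence. -/
def ClosedGen (Φ : Set Fml) (Δ : Set Default) (s : DSeq) : Prop :=
  Generating Φ Δ s ∧ ∀ t : DSeq, Generating Φ Δ t → ¬ StrictInit s t

end DAL

/-! Build the sequence greedily against `E`: at each step apply a default whose prerequisite
follows from `Φ` and the consequents collected so far and whose justification `E` does not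
refute, preferring, among those that add a new consequent, the one of least code. Every
collected consequent lies in `E`. The least-code choice is fair: a default can stay applicable
with its consequent missing only while infinitely many distinct defaults of smaller code are
applied. Hence `Cn (Φ ∪ Cons_s)` is closed under the defaults, and minimality of `E` gives
`E = Cn (Φ ∪ Cons_s)`. The sequence stops only when no default is applicable, and for normal
defaults any default that could extend it would be applicable, so it is closed. -/

namespace DAL

def Justified (Ψ : Set Fml) (Γ : List Fml) (φ : Fml) : Prop :=
  Ax φ ∨ φ ∈ Ψ ∨ ∃ p ∈ Γ, fImp p φ ∈ Γ

inductive Deriv (Ψ : Set Fml) : Fml → Prop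
  | ax {φ} : Ax φ → Deriv Ψ φ
  | mem {φ} : φ ∈ Ψ → Deriv Ψ φ
  | mp {p q} : Deriv Ψ p → Deriv Ψ (fImp p q) → Deriv Ψ q

section ListProofs

variable {Ψ : Set Fml} {s t : List Fml} {φ : Fml}

lemma Justified.mono {Γ Γ' : List Fml} (h : Justified Ψ Γ φ)
    (hΓ : Γ ⊆ Γ') : Justified Ψ Γ' φ := by
  rcases h with h | h | ⟨p, hp, hpφ⟩
  exacts [Or.inl h, Or.inr (Or.inl h), Or.inr (Or.inr ⟨p, hΓ hp, hΓ hpφ⟩)]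

lemma isProof_iff :
    IsProof Ψ s ↔ ∀ (k : ℕ) (hk : k < s.length), Justified Ψ (s.take k) s[k] := by
  refine forall₂_congr fun k hk => or_congr_right <| or_congr_right ?_
  simp only [List.mem_take_iff_getElem]
  constructor
  · rintro ⟨i, j, hi, hj, he⟩
    exact ⟨_, ⟨i, by omega, rfl⟩, j, by omega, he⟩
  · rintro ⟨_, ⟨i, hi, rfl⟩, j, hj, he⟩
    exact ⟨i, j, by omega, by omega, he⟩

lemma IsProof.append (hs : IsProof Ψ s) (ht : IsProof Ψ t) :
    IsProof Ψ (s ++ t) := by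
  rw [isProof_iff] at *
  intro k hk
  rw [List.getElem_append, List.take_append]
  split_ifs with hks
  · exact (hs k hks).mono (List.subset_append_left _ _)
  · exact (ht (k - s.length) (by simp at hk; omega)).mono (List.subset_append_right _ _)

lemma IsProof.concat (hs : IsProof Ψ s) (hφ : Justified Ψ s φ) : IsProof Ψ (s ++ [φ]) := by
  rw [isProof_iff] at *
  intro k hk
  rw [List.getElem_append, List.take_append]
  split_ifs with hks
  · exact (hs k hks).mono (List.subset_append_left _ _)
  · have hk' : k = s.length := by simp at hk; omega
    subst hk'
    simpa using hφ

lemma Deriv.prov (h : Deriv Ψ φ) : Prov Ψ φ := by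
  have nil : IsProof Ψ [] := fun _ hk => absurd hk (Nat.not_lt_zero _)
  induction h with
  | ax h => exact ⟨_, nil.concat (Or.inl h), rfl⟩
  | mem h => exact ⟨_, nil.concat (Or.inr (Or.inl h)), rfl⟩
  | @mp p q _ _ ihp ihpq =>
    obtain ⟨s, hs, hsp⟩ := ihp
    obtain ⟨t, ht, htpq⟩ := ihpq
    refine ⟨s ++ t ++ [q], (hs.append ht).concat (Or.inr (Or.inr ⟨p, ?_, ?_⟩)),
      List.getLast?_concat⟩
    · exact List.mem_append_left t (List.mem_of_getLast? hsp)
    · exact List.mem_append_right s (List.mem_of_getLast? htpq)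

lemma Prov.deriv (h : Prov Ψ φ) : Deriv Ψ φ := by
  obtain ⟨s, hs, hlast⟩ := h
  have lines : ∀ k (hk : k < s.length), Deriv Ψ s[k] := by
    intro k
    induction k using Nat.strong_induction_on with
    | _ k ih =>
      intro hk
      rcases hs k hk with h | h | ⟨i, j, hi, hj, he⟩
      · exact .ax h
      · exact .mem h
      · exact .mp (ih i hi _) (he ▸ ih j hj _)
  obtain ⟨k, hk, rfl⟩ := List.mem_iff_getElem.mp (List.mem_of_getLast? hlast)
  exact lines k hk

end ListProofs

section Provability

variable {Ψ Ψ' : Set Fml} {φ : Fml}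

lemma Prov.of_ax (h : Ax φ) : Prov Ψ φ := (Deriv.ax h).prov

lemma Prov.of_mem (h : φ ∈ Ψ) : Prov Ψ φ := (Deriv.mem h).prov

lemma Prov.mp {p q : Fml} (hp : Prov Ψ p) (hpq : Prov Ψ (fImp p q)) : Prov Ψ q :=
  (Deriv.mp hp.deriv hpq.deriv).prov

lemma Prov.trans (h : Prov Ψ' φ) (hΨ' : ∀ ψ ∈ Ψ', Prov Ψ ψ) : Prov Ψ φ := by
  replace h := h.deriv
  induction h with
  | ax h => exact .of_ax h
  | mem h => exact hΨ' _ h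
  | mp _ _ ihp ihpq => exact ihp.mp ihpq

lemma Prov.mono (hΨ : Ψ ⊆ Ψ') (h : Prov Ψ φ) : Prov Ψ' φ :=
  h.trans fun _ hψ => .of_mem (hΨ hψ)

lemma Prov.exists_of_iUnion {C : ℕ → Set Fml} (hC : Monotone C) (h : Prov (⋃ n, C n) φ) :
    ∃ n, Prov (C n) φ := by
  replace h := h.deriv
  induction h with
  | ax h => exact ⟨0, .of_ax h⟩
  | mem h =>
    obtain ⟨n, hn⟩ := Set.mem_iUnion.mp h
    exact ⟨n, .of_mem hn⟩
  | mp _ _ ihp ihpq =>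
    obtain ⟨m, hm⟩ := ihp
    obtain ⟨n, hn⟩ := ihpq
    exact ⟨max m n, (hm.mono (hC (le_max_left m n))).mp (hn.mono (hC (le_max_right m n)))⟩

lemma prov_fTop : Prov Ψ fTop :=
  (Prov.of_ax (Ax.eqRefl .zero)).mp (.of_ax (Ax.pl2 _ _))

lemma Prov.of_fBot (h : Prov Ψ fBot) (φ : Fml) : Prov Ψ φ :=
  prov_fTop.mp (h.mp (.of_ax (Ax.pl2 _ φ)))

lemma not_consistent_of_prov_neg (hφ : Prov Ψ φ) (hn : Prov Ψ (.neg φ)) : ¬ Consistent Ψ :=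
  fun hΨ => hΨ (hφ.mp (hn.mp (.of_ax (Ax.pl2 _ fBot))))

lemma Consistent.subset (h : Consistent Ψ') (hΨ : Ψ ⊆ Ψ') : Consistent Ψ :=
  fun hb => h (hb.mono hΨ)

lemma subset_cn : Ψ ⊆ Cn Ψ := fun _ => Prov.of_mem

lemma cn_mono (hΨ : Ψ ⊆ Ψ') : Cn Ψ ⊆ Cn Ψ' := fun _ => Prov.mono hΨ

lemma cn_cn : Cn (Cn Ψ) = Cn Ψ :=
  Set.Subset.antisymm (fun _ h => h.trans fun _ => id) subset_cn

lemma consistent_of_neg_notMem (hΨ : Cn Ψ ⊆ Ψ) (h : Fml.neg φ ∉ Ψ) : Consistent Ψ :=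
  fun hb => h (hΨ (hb.of_fBot _))

end Provability

def GammaClosed (Φ : Set Fml) (Δ : Set Default) (Ψ X : Set Fml) : Prop :=
  Φ ⊆ X ∧ X = Cn X ∧ ∀ d ∈ Δ, d.pre ∈ X → Fml.neg d.jus ∉ Ψ → d.con ∈ X

section Gamma

variable {Φ : Set Fml} {Δ : Set Default} {Ψ X E : Set Fml}

lemma gammaSet_subset (hX : GammaClosed Φ Δ Ψ X) : GammaSet Φ Δ Ψ ⊆ X :=
  Set.sInter_subset_of_mem hX

lemma gammaClosed_gammaSet : GammaClosed Φ Δ Ψ (GammaSet Φ Δ Ψ) := by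
  refine ⟨fun φ hφ => Set.mem_sInter.mpr fun X hX => hX.1 hφ, ?_, ?_⟩
  · refine Set.Subset.antisymm subset_cn fun φ hφ => Set.mem_sInter.mpr fun X hX => ?_
    exact hX.2.1.symm.subset (cn_mono (gammaSet_subset hX) hφ)
  · exact fun d hd hpre hjus => Set.mem_sInter.mpr fun X hX =>
      hX.2.2 d hd (gammaSet_subset hX hpre) hjus

lemma IsExtension.gammaClosed (hE : IsExtension Φ Δ E) : GammaClosed Φ Δ E E :=
  (congrArg (GammaClosed Φ Δ E) hE).mpr gammaClosed_gammaSet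

lemma IsExtension.subset_of_gammaClosed (hE : IsExtension Φ Δ E) (hX : GammaClosed Φ Δ E X) :
    E ⊆ X :=
  hE.trans_subset (gammaSet_subset hX)

end Gamma

section Sequences

variable {s t : DSeq} {n : ℕ} {d : Default}

lemma consUpTo_succ_of_eq_some (h : s.f n = some d) :
    consUpTo s (n + 1) = insert d.con (consUpTo s n) := by
  ext χ
  simp only [consUpTo, Set.mem_insert_iff, Set.mem_ofPred_eq, Nat.lt_succ_iff_lt_or_eq]
  constructor
  · rintro ⟨i, hi | rfl, e, he, rfl⟩
    · exact Or.inr ⟨i, hi, e, he, rfl⟩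
    · exact Or.inl (by rw [Option.some.inj (he.symm.trans h)])
  · rintro (rfl | ⟨i, hi, e, he, rfl⟩)
    exacts [⟨n, Or.inr rfl, d, h, rfl⟩, ⟨i, Or.inl hi, e, he, rfl⟩]

lemma consUpTo_succ_of_eq_none (h : s.f n = none) : consUpTo s (n + 1) = consUpTo s n := by
  ext χ
  simp only [consUpTo, Set.mem_ofPred_eq, Nat.lt_succ_iff_lt_or_eq]
  constructor
  · rintro ⟨i, hi | rfl, e, he, rfl⟩
    exacts [⟨i, hi, e, he, rfl⟩, absurd (he.symm.trans h) (Option.some_ne_none e)]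
  · rintro ⟨i, hi, e, he, rfl⟩
    exact ⟨i, Or.inl hi, e, he, rfl⟩

lemma consAll_eq_iUnion (s : DSeq) : consAll s = ⋃ n, consUpTo s n := by
  ext χ
  simp only [consAll, consUpTo, Set.mem_ofPred_eq, Set.mem_iUnion]
  constructor
  · rintro ⟨i, e, he, rfl⟩
    exact ⟨i + 1, i, i.lt_succ_self, e, he, rfl⟩
  · rintro ⟨n, i, _, e, he, rfl⟩
    exact ⟨i, e, he, rfl⟩

lemma consAll_eq_consUpTo_of_eq_none (h : s.f n = none) : consAll s = consUpTo s n := by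
  refine Set.Subset.antisymm ?_ ((consAll_eq_iUnion s).symm ▸ Set.subset_iUnion _ n)
  rintro χ ⟨i, e, he, rfl⟩
  refine ⟨i, ?_, e, he, rfl⟩
  by_contra! hni
  exact Option.some_ne_none e (he.symm.trans (s.dc n i hni h))

lemma StrictInit.exists_next (h : StrictInit s t) :
    ∃ n d, s.f n = none ∧ t.f n = some d ∧ consUpTo t n = consAll s := by
  classical
  obtain ⟨hst, hstop⟩ := h
  let n := Nat.find hstop
  obtain ⟨hsn, htn⟩ : s.f n = none ∧ t.f n ≠ none := Nat.find_spec hstop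
  obtain ⟨d, htd⟩ := Option.ne_none_iff_exists'.mp htn
  refine ⟨n, d, hsn, htd, ?_⟩
  rw [consAll_eq_consUpTo_of_eq_none hsn]
  ext χ
  refine ⟨fun ⟨i, hi, e, he, hχ⟩ => ?_, fun ⟨i, hi, e, he, hχ⟩ => ⟨i, hi, e, hst i e he, hχ⟩⟩
  obtain ⟨e', he'⟩ : ∃ e', s.f i = some e' := by
    refine Option.ne_none_iff_exists'.mp fun hsi => Nat.find_min hstop hi ⟨hsi, ?_⟩
    rw [he]
    exact Option.some_ne_none e
  obtain rfl : e' = e := Option.some.inj ((hst i e' he').symm.trans he)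
  exact ⟨i, hi, e', he', hχ⟩

lemma closedGen_of_forall_not_consistent {Φ : Set Fml} {Δ : Set Default} (hs : Generating Φ Δ s)
    (hmax : ∀ n, s.f n = none → ∀ d ∈ Δ, Prov (Φ ∪ consAll s) d.pre →
      ¬ Consistent (insert d.con (Φ ∪ consAll s))) :
    ClosedGen Φ Δ s := by
  refine ⟨hs, fun t ht hst => ?_⟩
  obtain ⟨n, d, hsn, htn, hcut⟩ := hst.exists_next
  obtain ⟨hd, hpre, hcons⟩ := ht n d htn
  rw [hcut] at hpre
  rw [consUpTo_succ_of_eq_some htn, hcut, Set.union_insert] at hcons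
  exact hmax n hsn d hd hpre hcons

end Sequences


def Act.encode : Act → ℕ
  | .basic n => Nat.pair 0 n
  | .join x y => Nat.pair 1 (Nat.pair x.encode y.encode)
  | .meet x y => Nat.pair 2 (Nat.pair x.encode y.encode)
  | .compl x => Nat.pair 3 x.encode
  | .zero => Nat.pair 4 0
  | .one => Nat.pair 5 0

lemma Act.encode_injective : Function.Injective Act.encode := by
  intro x
  induction x <;> intro y h <;> cases y <;> simp only [Act.encode, Nat.pair_eq_pair] at h <;> aesop

def Fml.encode : Fml → ℕ
  | .neg p => Nat.pair 0 p.encode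
  | .or p q => Nat.pair 1 (Nat.pair p.encode q.encode)
  | .eq x y => Nat.pair 2 (Nat.pair x.encode y.encode)
  | .perm x => Nat.pair 3 x.encode
  | .forb x => Nat.pair 4 x.encode

lemma Fml.encode_injective : Function.Injective Fml.encode := by
  intro p
  induction p <;> intro q h <;> cases q <;>
    simp only [Fml.encode, Nat.pair_eq_pair, Act.encode_injective.eq_iff] at h <;> aesop

def Default.encode (d : Default) : ℕ :=
  Nat.pair d.pre.encode (Nat.pair d.jus.encode d.con.encode)

lemma Default.encode_injective : Function.Injective Default.encode := by
  rintro ⟨p, j, c⟩ ⟨p', j', c'⟩ h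
  simpa [Default.encode, Nat.pair_eq_pair, Fml.encode_injective.eq_iff] using h

lemma Default.finite_encode_lt (d : Default) : {e : Default | e.encode < d.encode}.Finite :=
  (Set.finite_Iio d.encode).preimage Default.encode_injective.injOn

section Greedy

variable (Φ : Set Fml) (Δ : Set Default) (E : Set Fml)

def Applicable (C : Set Fml) (d : Default) : Prop :=
  d ∈ Δ ∧ Prov (Φ ∪ C) d.pre ∧ Fml.neg d.jus ∉ E

open Classical in
/-- Choosing the least code among defaults with a new consequent makes the construction fair;
repeating an applicable default otherwise makes the sequence stop only when nothing is
applicable. -/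
noncomputable def nextDefault (C : Set Fml) : Option Default :=
  if h : {d | Applicable Φ Δ E C d ∧ d.con ∉ C}.Nonempty then
    some (Function.argminOn Default.encode _ h)
  else if h' : {d | Applicable Φ Δ E C d}.Nonempty then some h'.some
  else none

noncomputable def stage : ℕ → Set Fml
  | 0 => ∅
  | n + 1 =>
    match nextDefault Φ Δ E (stage n) with
    | some d => insert d.con (stage n)
    | none => stage n

noncomputable def greedySeq : DSeq where
  f n := nextDefault Φ Δ E (stage Φ Δ E n)
  dc m n hmn hm := by
    induction n, hmn using Nat.le_induction with
    | base => exact hm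
    | succ n _ ih => simp only [stage, ih]

variable {Φ Δ E} {C C' : Set Fml} {d : Default} {n : ℕ}

lemma Applicable.mono (h : Applicable Φ Δ E C d) (hC : C ⊆ C') : Applicable Φ Δ E C' d :=
  ⟨h.1, h.2.1.mono (Set.union_subset_union_right Φ hC), h.2.2⟩

lemma applicable_of_nextDefault_eq_some (h : nextDefault Φ Δ E C = some d) :
    Applicable Φ Δ E C d := by
  unfold nextDefault at h
  split_ifs at h with h₁ h₂ <;> cases h
  exacts [(Function.argminOn_mem _ _ h₁).1, h₂.some_mem]

lemma nextDefault_ne_none (h : Applicable Φ Δ E C d) : nextDefault Φ Δ E C ≠ none := by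
  unfold nextDefault
  split_ifs with h₁ h₂
  exacts [Option.some_ne_none _, Option.some_ne_none _, fun _ => h₂ ⟨d, h⟩]

lemma exists_nextDefault_eq_some_fresh (h : Applicable Φ Δ E C d) (hd : d.con ∉ C) :
    ∃ e, nextDefault Φ Δ E C = some e ∧ e.con ∉ C ∧ e.encode ≤ d.encode := by
  let fresh := {e | Applicable Φ Δ E C e ∧ e.con ∉ C}
  have hfresh : fresh.Nonempty := ⟨d, h, hd⟩
  exact ⟨_, by rw [nextDefault, dif_pos hfresh], (Function.argminOn_mem _ fresh hfresh).2,
    Function.argminOn_le _ fresh ⟨h, hd⟩⟩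

lemma stage_succ_of_eq_some (h : nextDefault Φ Δ E (stage Φ Δ E n) = some d) :
    stage Φ Δ E (n + 1) = insert d.con (stage Φ Δ E n) := by
  rw [stage, h]

lemma stage_mono : Monotone (stage Φ Δ E) := by
  refine monotone_nat_of_le_succ fun n => ?_
  cases h : nextDefault Φ Δ E (stage Φ Δ E n) with
  | none => simp only [stage, h, le_refl]
  | some d => exact (stage_succ_of_eq_some h).symm ▸ Set.subset_insert _ _

lemma consUpTo_greedySeq (n : ℕ) : consUpTo (greedySeq Φ Δ E) n = stage Φ Δ E n := by
  induction n with
  | zero => ext; simp [consUpTo, stage]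
  | succ n ih =>
    cases h : nextDefault Φ Δ E (stage Φ Δ E n) with
    | none => rw [consUpTo_succ_of_eq_none h, ih, stage, h]
    | some d => rw [consUpTo_succ_of_eq_some h, ih, stage_succ_of_eq_some h]

lemma consAll_greedySeq : consAll (greedySeq Φ Δ E) = ⋃ n, stage Φ Δ E n := by
  simp only [consAll_eq_iUnion, consUpTo_greedySeq]

lemma exists_con_mem_stage (hd : Applicable Φ Δ E (stage Φ Δ E n) d) :
    ∃ m, d.con ∈ stage Φ Δ E m := by
  by_contra! hfresh
  -- while `d.con` is missing, every step collects a new consequent of a default coded below `d`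
  have step : ∀ m, ∃ e, nextDefault Φ Δ E (stage Φ Δ E (n + m)) = some e ∧
      e.con ∉ stage Φ Δ E (n + m) ∧ e.encode < d.encode := by
    intro m
    obtain ⟨e, he, hfe, hle⟩ := exists_nextDefault_eq_some_fresh
      (hd.mono (stage_mono (Nat.le_add_right n m))) (hfresh _)
    refine ⟨e, he, hfe, hle.lt_of_ne fun hed => hfresh (n + m + 1) ?_⟩
    rw [← Default.encode_injective hed, stage_succ_of_eq_some he]
    exact Set.mem_insert _ _
  choose e he hfe hlt using step
  have e_injective : Function.Injective e := Function.Injective.of_lt_imp_ne fun a b hab hab' =>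
    hfe b (stage_mono (by omega : n + (a + 1) ≤ n + b)
      (hab' ▸ (stage_succ_of_eq_some (he a)).symm ▸ Set.mem_insert _ _))
  exact Set.infinite_of_injective_forall_mem e_injective hlt d.finite_encode_lt

end Greedy

section Extension

variable {Φ : Set Fml} {Δ : Set Default} {E : Set Fml}

lemma gammaClosed_cn_greedySeq :
    GammaClosed Φ Δ E (Cn (Φ ∪ consAll (greedySeq Φ Δ E))) := by
  refine ⟨Set.subset_union_left.trans subset_cn, cn_cn.symm, fun d hd hpre hjus => ?_⟩
  have hchain : Monotone fun n => Φ ∪ stage Φ Δ E n :=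
    fun m n hmn => Set.union_subset_union_right Φ (stage_mono hmn)
  rw [consAll_greedySeq, Set.union_iUnion] at hpre ⊢
  obtain ⟨n, hn⟩ := Prov.exists_of_iUnion hchain hpre
  obtain ⟨m, hm⟩ := exists_con_mem_stage (n := n) ⟨hd, hn, hjus⟩
  exact subset_cn (Set.mem_iUnion.mpr ⟨m, Or.inr hm⟩)

lemma IsExtension.stage_subset (hE : IsExtension Φ Δ E) (n : ℕ) : stage Φ Δ E n ⊆ E := by
  obtain ⟨hΦ, hcn, hclosed⟩ := hE.gammaClosed
  induction n with
  | zero => exact Set.empty_subset E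
  | succ n ih =>
    cases h : nextDefault Φ Δ E (stage Φ Δ E n) with
    | none => simpa only [stage, h] using ih
    | some d =>
      obtain ⟨hd, hpre, hjus⟩ := applicable_of_nextDefault_eq_some h
      have hpreE : d.pre ∈ E := hcn.symm.subset (hpre.mono (Set.union_subset hΦ ih))
      rw [stage_succ_of_eq_some h]
      exact Set.insert_subset (hclosed d hd hpreE hjus) ih

lemma IsExtension.eq_cn_greedySeq (hE : IsExtension Φ Δ E) :
    E = Cn (Φ ∪ consAll (greedySeq Φ Δ E)) := by
  obtain ⟨hΦ, hcn, -⟩ := hE.gammaClosed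
  refine Set.Subset.antisymm (hE.subset_of_gammaClosed gammaClosed_cn_greedySeq) ?_
  refine (cn_mono (Set.union_subset hΦ ?_)).trans hcn.symm.subset
  rw [consAll_greedySeq]
  exact Set.iUnion_subset hE.stage_subset

lemma IsExtension.generating_greedySeq (hE : IsExtension Φ Δ E) :
    Generating Φ Δ (greedySeq Φ Δ E) := by
  obtain ⟨hΦ, hcn, -⟩ := hE.gammaClosed
  intro i d h
  obtain ⟨hd, hpre, hjus⟩ := applicable_of_nextDefault_eq_some h
  rw [consUpTo_greedySeq, consUpTo_greedySeq]
  exact ⟨hd, hpre, (consistent_of_neg_notMem hcn.symm.subset hjus).subset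
    (Set.union_subset hΦ (hE.stage_subset (i + 1)))⟩

lemma IsExtension.closedGen_greedySeq (hE : IsExtension Φ Δ E) (hΔ : ∀ d ∈ Δ, d.Normal) :
    ClosedGen Φ Δ (greedySeq Φ Δ E) := by
  refine closedGen_of_forall_not_consistent hE.generating_greedySeq fun n hn d hd hpre hcons => ?_
  have hstop : consAll (greedySeq Φ Δ E) = stage Φ Δ E n := by
    rw [consAll_eq_consUpTo_of_eq_none hn, consUpTo_greedySeq]
  have hjus : Fml.neg d.jus ∉ E := by
    rw [hΔ d hd, hE.eq_cn_greedySeq]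
    exact fun hneg => not_consistent_of_prov_neg (.of_mem (Set.mem_insert _ _))
      (hneg.mono (Set.subset_insert _ _)) hcons
  rw [hstop] at hpre
  exact nextDefault_ne_none ⟨hd, hpre, hjus⟩ hn

end Extension

end DAL

/-- Every Reiter extension arises from a closed generating sequence:
if E is a Reiter extension of Φ under the set Δ of normal defaults, then there is a
closed generating sequence s of defaults of Δ for Φ with E = Cn(Φ ∪ Cons_s). -/
theorem DAL.extension_has_closed_generating_sequence
    (Φ : Set DAL.Fml) (Δ : Set DAL.Default) (hΔ : ∀ d ∈ Δ, d.Normal)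
    (E : Set DAL.Fml) (hE : DAL.IsExtension Φ Δ E) :
    ∃ s : DAL.DSeq, DAL.ClosedGen Φ Δ s ∧ E = DAL.Cn (Φ ∪ DAL.consAll s) :=
  ⟨DAL.greedySeq Φ Δ E, hE.closedGen_greedySeq hΔ, hE.eq_cn_greedySeq⟩
end

section
/- Segerberg's canonical structure: for any ⊢-consistent set Φ of DAL formulas, the triple ⟨A_Φ, P_{A_Φ}, F_{A_Φ}⟩ is a deontic action algebra; that is, P_{A_Φ} and F_{A_Φ} are ideals of the Lindenbaum-Tarski Boolean algebra A_Φ and P_{A_Φ} ∩ F_{A_Φ} = {[0]_Φ}. -/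
namespace DAL

/-- The elements of the Lindenbaum-Tarski algebra A_Φ are represented by
≡_Φ-saturated sets of actions; `zeroClass Φ` represents the singleton {[0]_Φ}. -/
def zeroClass (Φ : Set Fml) : Set Act := {α | Prov Φ (.eq α .zero)}

/-- An ideal of the Lindenbaum-Tarski algebra A_Φ, represented as a ≡_Φ-saturated
set of actions closed under ⊔ and closed under ⊓ with arbitrary actions. -/
def IsIdealLT (Φ : Set Fml) (I : Set Act) : Prop :=
  (∀ α β : Act, Prov Φ (.eq α β) → α ∈ I → β ∈ I) ∧
  (∀ α ∈ I, ∀ β ∈ I, Act.join α β ∈ I) ∧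
  (∀ α ∈ I, ∀ β : Act, Act.meet α β ∈ I)

/-- The ideal of A_Φ generated by a set: the intersection of all ideals containing it. -/
def genIdealLT (Φ : Set Fml) (B : Set Act) : Set Act :=
  ⋂₀ {I : Set Act | IsIdealLT Φ I ∧ B ⊆ I}

/-- P_{A_Φ}: the smallest ideal of A_Φ containing [α]_Φ whenever Φ ⊢ P(α). -/
def PIdeal (Φ : Set Fml) : Set Act :=
  ⋂₀ {I : Set Act | IsIdealLT Φ I ∧ ∀ α : Act, Prov Φ (.perm α) → α ∈ I}

/-- F_{A_Φ}: the smallest ideal of A_Φ containing [α]_Φ whenever Φ ⊢ F(α). -/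
def FIdeal (Φ : Set Fml) : Set Act :=
  ⋂₀ {I : Set Act | IsIdealLT Φ I ∧ ∀ α : Act, Prov Φ (.forb α) → α ∈ I}

/-- The Boolean order of A_Φ: [β]_Φ ⊑ [α]_Φ iff [β]_Φ = [β]_Φ · [α]_Φ. -/
def leLT (Φ : Set Fml) (β α : Act) : Prop := Prov Φ (.eq β (.meet β α))

/-- The deontic dual P⁰ of P_{A_Φ}. -/
def dualP (Φ : Set Fml) : Set Act :=
  {β | ∃ α : Act, Prov Φ (.neg (.perm α)) ∧ leLT Φ β α} \ PIdeal Φ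

/-- The deontic dual F⁰ of F_{A_Φ}. -/
def dualF (Φ : Set Fml) : Set Act :=
  {β | ∃ α : Act, Prov Φ (.neg (.forb α)) ∧ leLT Φ β α} \ FIdeal Φ

/-- [α]_Φ ≼ P⁰: some [β]_Φ ⊑ [α]_Φ lies in P⁰. -/
def precP (Φ : Set Fml) (α : Act) : Prop := ∃ β : Act, leLT Φ β α ∧ β ∈ dualP Φ

/-- [α]_Φ ≼ F⁰: some [β]_Φ ⊑ [α]_Φ lies in F⁰. -/
def precF (Φ : Set Fml) (α : Act) : Prop := ∃ β : Act, leLT Φ β α ∧ β ∈ dualF Φ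

/-- A set of defaults consists of basic deontic defaults only: each default has the
form P(α):P(β)/P(β) or F(α):F(β)/F(β). -/
def BasicDeonticSet (Δ : Set Default) : Prop :=
  ∀ d ∈ Δ, ∃ α β : Act,
    d = ⟨Fml.perm α, Fml.perm β, Fml.perm β⟩ ∨ d = ⟨Fml.forb α, Fml.forb β, Fml.forb β⟩

/-- The conditions (i)-(iii) that the output pair (P′, F′) of the operator E^Δ_Φ
must satisfy. -/
def EConds (Φ : Set Fml) (Δ : Set Default) (P' F' : Set Act) : Prop :=
  IsIdealLT Φ P' ∧ IsIdealLT Φ F' ∧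
  PIdeal Φ ⊆ P' ∧ FIdeal Φ ⊆ F' ∧
  (∀ α β : Act, (⟨Fml.perm α, Fml.perm β, Fml.perm β⟩ : Default) ∈ Δ →
    α ∈ P' → genIdealLT Φ (P' ∪ {β}) ∩ F' = zeroClass Φ → ¬ precP Φ β → β ∈ P') ∧
  (∀ α β : Act, (⟨Fml.forb α, Fml.forb β, Fml.forb β⟩ : Default) ∈ Δ →
    α ∈ F' → genIdealLT Φ (F' ∪ {β}) ∩ P' = zeroClass Φ → ¬ precF Φ β → β ∈ F')

/-- The operator E^Δ_Φ as a relation: `EOpRel Φ Δ (P, F) (P', F')` holds iff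
(P', F') is the (componentwise) smallest pair of ideals satisfying conditions
(i)-(iii), i.e. E^Δ_Φ(P, F) = (P', F'). -/
def EOpRel (Φ : Set Fml) (Δ : Set Default) :
    Set Act × Set Act → Set Act × Set Act → Prop :=
  fun _ out =>
    EConds Φ Δ out.1 out.2 ∧ ∀ Q G : Set Act, EConds Φ Δ Q G → out.1 ⊆ Q ∧ out.2 ⊆ G

/-- (P, F) is an algebraic extension of Φ under Δ iff it is a fixed point of E^Δ_Φ. -/
def AlgExt (Φ : Set Fml) (Δ : Set Default) (P F : Set Act) : Prop :=
  EOpRel Φ Δ (P, F) (P, F)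

/-- Satisfaction in the deontic action algebra ⟨A_Φ, P, F⟩ under the canonical
valuation I_Φ(a) = [a]_Φ, with ideals of A_Φ represented as saturated sets of
actions. -/
def SatLT (Φ : Set Fml) (P F : Set Act) : Fml → Prop
  | .neg φ => ¬ SatLT Φ P F φ
  | .or φ ψ => SatLT Φ P F φ ∨ SatLT Φ P F ψ
  | .eq α β => Prov Φ (.eq α β)
  | .perm α => α ∈ P
  | .forb α => α ∈ F

end DAL

/-!
Provable permission is already an ideal of `A_Φ`: it is saturated under `≡_Φ` by the
substitution axiom, closed under `⊔` by D1, and downward closed because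
`α = (α ⊓ β) ⊔ (α ⊓ β̄)`, so D1 splits `P(α)` into `P(α ⊓ β) ∧ P(α ⊓ β̄)`. Hence
`P_{A_Φ} = {α | Φ ⊢ P(α)}`, and likewise `F_{A_Φ} = {α | Φ ⊢ F(α)}` by D2. By D3 the
intersection of the two is `{α | Φ ⊢ α = 0}`, and consistency together with the axiom
`¬(0 = 1)` keeps `A_Φ` nondegenerate.
-/

namespace DAL

variable {Φ : Set Fml} {p q r : Fml}

namespace IsProof

theorem nil : IsProof Φ [] := fun _ hk => absurd hk (Nat.not_lt_zero _)

theorem append_s11 {s t : List Fml} (hs : IsProof Φ s) (ht : IsProof Φ t) :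
    IsProof Φ (s ++ t) := by
  intro k hk
  rw [List.length_append] at hk
  by_cases hks : k < s.length
  · have e : ∀ m (hm : m < s.length), (s ++ t)[m]'(by simp; omega) = s[m] :=
      fun m hm => List.getElem_append_left hm
    rcases hs k hks with h | h | ⟨i, j, hi, hj, hij⟩
    · exact Or.inl (by rwa [e k hks])
    · exact Or.inr (Or.inl (by rwa [e k hks]))
    · exact Or.inr (Or.inr ⟨i, j, hi, hj, by rw [e k hks, e i (by omega), e j (by omega), hij]⟩)
  · have e : ∀ m (hm : m < t.length), (s ++ t)[s.length + m]'(by simp; omega) = t[m] :=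
      fun m hm => by rw [List.getElem_append_right (by omega)]; simp
    obtain ⟨k, rfl⟩ : ∃ m, k = s.length + m := ⟨k - s.length, by omega⟩
    rcases ht k (by omega) with h | h | ⟨i, j, hi, hj, hij⟩
    · exact Or.inl (by rwa [e k])
    · exact Or.inr (Or.inl (by rwa [e k]))
    · refine Or.inr (Or.inr ⟨s.length + i, s.length + j, by omega, by omega, ?_⟩)
      rw [e k, e i (by omega), e j (by omega), hij]

theorem concat_s11 {s : List Fml} (hs : IsProof Φ s)
    (hq : Ax q ∨ q ∈ Φ ∨ ∃ p ∈ s, fImp p q ∈ s) : IsProof Φ (s ++ [q]) := by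
  intro k hk
  have e : ∀ m (hm : m < s.length), (s ++ [q])[m]'(by simp; omega) = s[m] :=
    fun m hm => List.getElem_append_left hm
  rw [List.length_append, List.length_singleton] at hk
  by_cases hks : k < s.length
  · rcases hs k hks with h | h | ⟨i, j, hi, hj, hij⟩
    · exact Or.inl (by rwa [e k hks])
    · exact Or.inr (Or.inl (by rwa [e k hks]))
    · exact Or.inr (Or.inr ⟨i, j, hi, hj, by rw [e k hks, e i (by omega), e j (by omega), hij]⟩)
  · obtain rfl : k = s.length := by omega
    rw [List.getElem_concat_length rfl]
    rcases hq with h | h | ⟨p, hp, hpq⟩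
    · exact Or.inl h
    · exact Or.inr (Or.inl h)
    · obtain ⟨i, hi, rfl⟩ := List.mem_iff_getElem.1 hp
      obtain ⟨j, hj, hij⟩ := List.mem_iff_getElem.1 hpq
      exact Or.inr (Or.inr ⟨i, j, hi, hj, by rw [e i hi, e j hj, hij]⟩)

end IsProof

namespace Prov

theorem ax (h : Ax p) : Prov Φ p :=
  ⟨[p], IsProof.nil.concat_s11 (Or.inl h), rfl⟩

theorem mp_s11 (hpq : Prov Φ (fImp p q)) (hp : Prov Φ p) : Prov Φ q := by
  obtain ⟨s, hs, hs_last⟩ := hpq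
  obtain ⟨t, ht, ht_last⟩ := hp
  refine ⟨s ++ t ++ [q], (hs.append_s11 ht).concat_s11 (Or.inr (Or.inr ⟨p, ?_, ?_⟩)), List.getLast?_concat⟩
  · exact List.mem_append_right s (List.mem_of_getLast? ht_last)
  · exact List.mem_append_left t (List.mem_of_getLast? hs_last)

theorem imp_trans (h₁ : Prov Φ (fImp p q)) (h₂ : Prov Φ (fImp q r)) : Prov Φ (fImp p r) :=
  mp_s11 (mp_s11 (ax (Ax.pl4 q r (.neg p))) h₂) h₁

theorem imp_refl (p : Fml) : Prov Φ (fImp p p) :=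
  imp_trans (ax (Ax.pl2 p p)) (ax (Ax.pl1 p))

theorem or_neg_self (p : Fml) : Prov Φ (.or p (.neg p)) :=
  mp_s11 (ax (Ax.pl3 (.neg p) p)) (imp_refl p)

theorem imp_neg_neg (p : Fml) : Prov Φ (fImp p (.neg (.neg p))) :=
  or_neg_self (.neg p)

theorem or_imp_or_right (h : Prov Φ (fImp q r)) : Prov Φ (fImp (.or p q) (.or p r)) :=
  mp_s11 (ax (Ax.pl4 q r p)) h

theorem or_imp_or_left (h : Prov Φ (fImp p q)) : Prov Φ (fImp (.or p r) (.or q r)) :=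
  imp_trans (ax (Ax.pl3 p r)) (imp_trans (or_imp_or_right h) (ax (Ax.pl3 r q)))

theorem neg_neg_imp (p : Fml) : Prov Φ (fImp (.neg (.neg p)) p) :=
  mp_s11 (ax (Ax.pl3 p (.neg (.neg (.neg p)))))
    (mp_s11 (or_imp_or_right (imp_neg_neg (.neg p))) (or_neg_self p))

theorem contrapose (h : Prov Φ (fImp p q)) : Prov Φ (fImp (.neg q) (.neg p)) :=
  mp_s11 (ax (Ax.pl3 (.neg p) (.neg (.neg q)))) (mp_s11 (or_imp_or_right (imp_neg_neg q)) h)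

theorem imp_or_right (r p : Fml) : Prov Φ (fImp p (.or r p)) :=
  imp_trans (ax (Ax.pl2 p r)) (ax (Ax.pl3 p r))

theorem and_left (h : Prov Φ (fAnd p q)) : Prov Φ p :=
  mp_s11 (imp_trans (contrapose (ax (Ax.pl2 (.neg p) (.neg q)))) (neg_neg_imp p)) h

theorem and_right (h : Prov Φ (fAnd p q)) : Prov Φ q :=
  mp_s11 (imp_trans (contrapose (imp_or_right (.neg p) (.neg q))) (neg_neg_imp q)) h

theorem and_intro (hp : Prov Φ p) (hq : Prov Φ q) : Prov Φ (fAnd p q) := by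
  have hnp_imp : Prov Φ (fImp (.neg p) (.neg q)) :=
    mp_s11 (ax (Ax.pl2 (.neg (.neg p)) (.neg q))) (mp_s11 (imp_neg_neg p) hp)
  have h : Prov Φ (fImp (.or (.neg p) (.neg q)) (.neg q)) :=
    imp_trans (or_imp_or_left hnp_imp) (ax (Ax.pl1 (.neg q)))
  exact mp_s11 (contrapose h) (mp_s11 (imp_neg_neg q) hq)

theorem iff_mp (h : Prov Φ (fIff p q)) (hp : Prov Φ p) : Prov Φ q :=
  mp_s11 (and_left h) hp

theorem iff_mpr (h : Prov Φ (fIff p q)) (hq : Prov Φ q) : Prov Φ p :=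
  mp_s11 (and_right h) hq

theorem fBot_of_neg (hp : Prov Φ p) (hnp : Prov Φ (.neg p)) : Prov Φ fBot :=
  mp_s11 (contrapose (mp_s11 (imp_or_right (.neg fTop) p) hp)) hnp

end Prov

theorem ARepl.refl (a b : Act) : ∀ c : Act, ARepl a b c c
  | .basic n => .basic n
  | .join x y => .join (ARepl.refl a b x) (ARepl.refl a b y)
  | .meet x y => .meet (ARepl.refl a b x) (ARepl.refl a b y)
  | .compl x => .compl (ARepl.refl a b x)
  | .zero => .zero
  | .one => .one

namespace Prov

variable {x y z : Act}

theorem of_repl (hxy : Prov Φ (.eq x y)) (hr : FRepl x y p q) (hp : Prov Φ p) : Prov Φ q :=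
  mp_s11 (mp_s11 (ax (Ax.subst hr)) hxy) hp

theorem eq_symm (h : Prov Φ (.eq x y)) : Prov Φ (.eq y x) :=
  mp_s11 (ax (Ax.eqSymm x y)) h

theorem eq_trans (h₁ : Prov Φ (.eq x y)) (h₂ : Prov Φ (.eq y z)) : Prov Φ (.eq x z) :=
  mp_s11 (mp_s11 (ax (Ax.eqTrans x y z)) h₁) h₂

theorem meet_congr_right (α : Act) (h : Prov Φ (.eq x y)) : Prov Φ (.eq (.meet α x) (.meet α y)) :=
  of_repl h (.eq (ARepl.refl x y _) (.meet (ARepl.refl x y α) .repl)) (ax (Ax.eqRefl _))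

theorem eq_join_meet_meet_compl (α β : Act) :
    Prov Φ (.eq α (.join (.meet α β) (.meet α (.compl β)))) :=
  eq_trans (eq_trans (eq_symm (ax (Ax.meetOne α)))
      (meet_congr_right α (eq_symm (ax (Ax.joinCompl β)))))
    (ax (Ax.meetDistrib α β (.compl β)))

theorem eq_zero_iff : Prov Φ (.eq x .zero) ↔ Prov Φ (.perm x) ∧ Prov Φ (.forb x) :=
  ⟨fun h => have h' := iff_mp (ax (Ax.d3 x)) h; ⟨and_left h', and_right h'⟩,
    fun ⟨hp, hf⟩ => iff_mpr (ax (Ax.d3 x)) (and_intro hp hf)⟩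

end Prov

theorem isIdealLT_setOf_prov (O : Act → Fml)
    (h_join : ∀ x y, Ax (fIff (O (.join x y)) (fAnd (O x) (O y))))
    (h_repl : ∀ x y, FRepl x y (O x) (O y)) : IsIdealLT Φ {α | Prov Φ (O α)} := by
  refine ⟨fun α β hαβ hα => Prov.of_repl hαβ (h_repl α β) hα,
    fun α hα β hβ => Prov.iff_mpr (Prov.ax (h_join α β)) (Prov.and_intro hα hβ), fun α hα β => ?_⟩
  have h_split := Prov.of_repl (Prov.eq_join_meet_meet_compl α β) (h_repl _ _) hα
  exact Prov.and_left (Prov.iff_mp (Prov.ax (h_join _ _)) h_split)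

theorem genIdealLT_eq_self {B : Set Act} (hB : IsIdealLT Φ B) : genIdealLT Φ B = B :=
  (Set.sInter_subset_of_mem (show B ∈ {I | IsIdealLT Φ I ∧ B ⊆ I} from ⟨hB, subset_rfl⟩)).antisymm
    (Set.subset_sInter fun _ hI => hI.2)

theorem isIdealLT_setOf_prov_perm (Φ : Set Fml) : IsIdealLT Φ {α | Prov Φ (.perm α)} :=
  isIdealLT_setOf_prov .perm Ax.d1 fun _ _ => .perm .repl

theorem isIdealLT_setOf_prov_forb (Φ : Set Fml) : IsIdealLT Φ {α | Prov Φ (.forb α)} :=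
  isIdealLT_setOf_prov .forb Ax.d2 fun _ _ => .forb .repl

theorem PIdeal_eq (Φ : Set Fml) : PIdeal Φ = {α | Prov Φ (.perm α)} :=
  genIdealLT_eq_self (isIdealLT_setOf_prov_perm Φ)

theorem FIdeal_eq (Φ : Set Fml) : FIdeal Φ = {α | Prov Φ (.forb α)} :=
  genIdealLT_eq_self (isIdealLT_setOf_prov_forb Φ)

end DAL

/-- Segerberg's canonical structure: for any ⊢-consistent Φ, the
triple ⟨A_Φ, P_{A_Φ}, F_{A_Φ}⟩ is a deontic action algebra: P_{A_Φ} and F_{A_Φ}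
are ideals of the Lindenbaum-Tarski algebra A_Φ (which is nondegenerate), and
P_{A_Φ} ∩ F_{A_Φ} = {[0]_Φ}. -/
theorem DAL.canonical_deontic_action_algebra (Φ : Set DAL.Fml) (hΦ : DAL.Consistent Φ) :
    DAL.IsIdealLT Φ (DAL.PIdeal Φ) ∧ DAL.IsIdealLT Φ (DAL.FIdeal Φ) ∧
    DAL.PIdeal Φ ∩ DAL.FIdeal Φ = DAL.zeroClass Φ ∧
    ¬ DAL.Prov Φ (DAL.Fml.eq DAL.Act.zero DAL.Act.one) := by
  refine ⟨DAL.PIdeal_eq Φ ▸ DAL.isIdealLT_setOf_prov_perm Φ,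
    DAL.FIdeal_eq Φ ▸ DAL.isIdealLT_setOf_prov_forb Φ, ?_,
    fun h => hΦ (DAL.Prov.fBot_of_neg h (DAL.Prov.ax DAL.Ax.nondeg))⟩
  ext α
  rw [DAL.PIdeal_eq, DAL.FIdeal_eq]
  exact DAL.Prov.eq_zero_iff.symm
end
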